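/- Let a,b≥0, −1<c,d≤0, 0≤q<1 with ab<1, and let N∈ℕ. Then the normalization constant Z_N^{(q,a,b,c,d)} = ∑_{λ∈TL_N} wt_N^{(q,a,b,c,d)}(λ) is finite, i.e., the family of nonnegative two-layer weights is summable over the countable set TL_N; hence the two-layer measure P_N^{(q,a,b,c,d)} is a well-defined probability measure on TL_N. -/

import Mathlib

/-- A Bernoulli path on `{0,…,N}`: increments in `{0,1}`. -/
def IsBPath (N : ℕ) (L : Fin (N+1) → ℤ) : Prop :=
  ∀ j : Fin N, L j.succ = L j.castSucc ∨ L j.succ = L j.castSucc + 1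

/-- The two-layer configuration space `TL_N`. -/
def TLset (N : ℕ) : Set ((Fin (N+1) → ℤ) × (Fin (N+1) → ℤ)) :=
  {p | p.1 0 = 0 ∧ (∀ j, p.2 j ≤ p.1 j) ∧ IsBPath N p.1 ∧ IsBPath N p.2}

/-- The finite q-Pochhammer symbol `(z;q)_n = ∏_{j=0}^{n-1} (1 - z qʲ)`. -/
noncomputable def qPoch (z q : ℝ) (n : ℕ) : ℝ := ∏ j ∈ Finset.range n, (1 - z * q ^ j)

/-- The local weight `W^{(q,c,d)}(x | u,v)`. -/
noncomputable def Wfac (q c d : ℝ) (x u v : ℤ) : ℝ :=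
  if u = 1 ∧ v = 0 then 1 - q ^ x.toNat
  else if u = 1 ∧ v = 1 then 1 + d * q ^ x.toNat
  else if u = 0 ∧ v = 0 then 1 + c * q ^ x.toNat
  else 1 - c * d * q ^ x.toNat

/-- The two-layer weight `wt_N^{(q,a,b,c,d)}`. -/
noncomputable def twt (N : ℕ) (q a b c d : ℝ) (p : (Fin (N+1) → ℤ) × (Fin (N+1) → ℤ)) : ℝ :=
  a ^ (p.1 0 - p.2 0).toNat * b ^ (p.1 (Fin.last N) - p.2 (Fin.last N)).toNat *
    (qPoch (c * d) q (p.1 (Fin.last N) - p.2 (Fin.last N)).toNat /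
      qPoch q q (p.1 (Fin.last N) - p.2 (Fin.last N)).toNat) *
    ∏ j : Fin N, Wfac q c d (p.1 j.succ - p.2 j.succ)
      (p.1 j.succ - p.1 j.castSucc) (p.2 j.succ - p.2 j.castSucc)

/-!
The weight of a two-layer configuration is at most a constant times `a ^ k₁ * b ^ k₂`, where
`k₁` and `k₂` are the gaps between the layers at the two ends: every local factor lies in
`[0, 1]`, and `(cd;q)_n / (q;q)_n ≤ exp (q / (1 - q)²)` uniformly in `n`, from
`log (1 - x) ≥ -x / (1 - x)`. Since the layers are Bernoulli paths, the gaps differ by at most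
`N`, so the weight is `O((ab)^{k₁})`. A configuration is determined by `k₁` and its up-steps,
so `TL_N` injects into `ℕ × (finite set)` and the geometric series in `ab < 1` dominates the
weights. The empty configuration has weight `(1 + c)^N > 0`.
-/

open Finset Real

lemma exp_neg_div_le_one_sub {x s : ℝ} (hx : 0 ≤ x) (hxs : x ≤ s) (hs : s < 1) :
    exp (-(x / (1 - s))) ≤ 1 - x := by
  have hx1 : 0 < 1 - x := by linarith
  calc exp (-(x / (1 - s))) ≤ exp (-(x / (1 - x))) := by
        gcongr
    _ = exp (1 - (1 - x)⁻¹) := by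
        congr 1
        field_simp
        ring
    _ ≤ exp (log (1 - x)) := exp_le_exp.mpr (one_sub_inv_le_log_of_pos hx1)
    _ = 1 - x := exp_log hx1

lemma exp_neg_sum_div_le_prod_one_sub {ι : Type*} (t : Finset ι) {x : ι → ℝ} {s : ℝ}
    (hx : ∀ i ∈ t, 0 ≤ x i) (hxs : ∀ i ∈ t, x i ≤ s) (hs : s < 1) :
    exp (-((∑ i ∈ t, x i) / (1 - s))) ≤ ∏ i ∈ t, (1 - x i) := by
  rw [sum_div, ← sum_neg_distrib, exp_sum]
  exact prod_le_prod (fun i _ => (exp_pos _).le)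
    fun i hi => exp_neg_div_le_one_sub (hx i hi) (hxs i hi) hs

section QPochhammer

variable {z q : ℝ}

lemma qPoch_nonneg (hz : z ≤ 1) (hq₀ : 0 ≤ q) (hq₁ : q ≤ 1) (n : ℕ) : 0 ≤ qPoch z q n :=
  prod_nonneg fun j _ => by
    have := pow_le_one₀ hq₀ hq₁ (n := j)
    nlinarith [pow_nonneg hq₀ j]

lemma qPoch_le_one (hz₀ : 0 ≤ z) (hz₁ : z ≤ 1) (hq₀ : 0 ≤ q) (hq₁ : q ≤ 1) (n : ℕ) :
    qPoch z q n ≤ 1 :=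
  prod_le_one (fun j _ => by nlinarith [pow_le_one₀ hq₀ hq₁ (n := j), pow_nonneg hq₀ j])
    fun j _ => by nlinarith [pow_nonneg hq₀ j]

lemma exp_neg_le_qPoch_self (hq₀ : 0 ≤ q) (hq₁ : q < 1) (n : ℕ) :
    exp (-(q / (1 - q) ^ 2)) ≤ qPoch q q n := by
  have hgeom : ∑ j ∈ range n, q * q ^ j ≤ q / (1 - q) := by
    rw [← mul_sum, range_eq_Ico, ← mul_one_div, ← pow_zero q]
    exact mul_le_mul_of_nonneg_left (geom_sum_Ico_le_of_lt_one (m := 0) hq₀ hq₁) hq₀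
  calc exp (-(q / (1 - q) ^ 2)) ≤ exp (-((∑ j ∈ range n, q * q ^ j) / (1 - q))) := by
        refine exp_le_exp.mpr (neg_le_neg ?_)
        calc (∑ j ∈ range n, q * q ^ j) / (1 - q) ≤ q / (1 - q) / (1 - q) := by
              gcongr
          _ = q / (1 - q) ^ 2 := by rw [div_div, sq]
    _ ≤ qPoch q q n :=
        exp_neg_sum_div_le_prod_one_sub _ (fun j _ => by positivity)
          (fun j _ => mul_le_of_le_one_right hq₀ (pow_le_one₀ hq₀ hq₁.le)) hq₁

lemma qPoch_self_pos (hq₀ : 0 ≤ q) (hq₁ : q < 1) (n : ℕ) : 0 < qPoch q q n :=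
  (exp_pos _).trans_le (exp_neg_le_qPoch_self hq₀ hq₁ n)

lemma qPoch_div_qPoch_self_le (hz₀ : 0 ≤ z) (hz₁ : z ≤ 1) (hq₀ : 0 ≤ q) (hq₁ : q < 1)
    (n : ℕ) : qPoch z q n / qPoch q q n ≤ exp (q / (1 - q) ^ 2) := by
  rw [div_le_iff₀ (qPoch_self_pos hq₀ hq₁ n)]
  calc qPoch z q n ≤ exp (q / (1 - q) ^ 2) * exp (-(q / (1 - q) ^ 2)) := by
        rw [← exp_add, add_neg_cancel, exp_zero]
        exact qPoch_le_one hz₀ hz₁ hq₀ hq₁.le n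
    _ ≤ exp (q / (1 - q) ^ 2) * qPoch q q n := by
        gcongr
        exact exp_neg_le_qPoch_self hq₀ hq₁ n

end QPochhammer

lemma Wfac_nonneg {q c d : ℝ} (hc : -1 ≤ c) (hd : -1 ≤ d) (hcd : c * d ≤ 1) (hq₀ : 0 ≤ q)
    (hq₁ : q ≤ 1) (x u v : ℤ) : 0 ≤ Wfac q c d x u v := by
  have := pow_le_one₀ hq₀ hq₁ (n := x.toNat)
  have := pow_nonneg hq₀ x.toNat
  unfold Wfac
  split_ifs <;> nlinarith

lemma Wfac_le_one {q c d : ℝ} (hc : c ≤ 0) (hd : d ≤ 0) (hcd : 0 ≤ c * d) (hq₀ : 0 ≤ q)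
    (x u v : ℤ) : Wfac q c d x u v ≤ 1 := by
  have := pow_nonneg hq₀ x.toNat
  unfold Wfac
  split_ifs <;> nlinarith

lemma pow_mul_pow_le_of_le_add {a b : ℝ} (ha : 0 ≤ a) (hb : 0 ≤ b) (hab : a * b ≤ 1)
    {k l N : ℕ} (hkl : k ≤ l + N) (hlk : l ≤ k + N) :
    a ^ k * b ^ l ≤ (max 1 a * max 1 b) ^ N * (a * b) ^ (k - N) := by
  set m := min k l
  have hak : a ^ (k - m) ≤ max 1 a ^ N := (pow_le_pow_left₀ ha (le_max_right 1 a) _).trans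
    (pow_le_pow_right₀ (le_max_left 1 a) (by omega))
  have hbl : b ^ (l - m) ≤ max 1 b ^ N := (pow_le_pow_left₀ hb (le_max_right 1 b) _).trans
    (pow_le_pow_right₀ (le_max_left 1 b) (by omega))
  calc a ^ k * b ^ l = (a * b) ^ m * (a ^ (k - m) * b ^ (l - m)) := by
        rw [mul_pow, mul_mul_mul_comm, ← pow_add, ← pow_add,
          Nat.add_sub_cancel' (min_le_left k l), Nat.add_sub_cancel' (min_le_right k l)]
    _ ≤ (a * b) ^ (k - N) * (max 1 a ^ N * max 1 b ^ N) :=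
        mul_le_mul (pow_le_pow_of_le_one (by positivity) hab (by omega)) (by gcongr)
          (by positivity) (by positivity)
    _ = _ := by ring

section Paths

variable {N : ℕ} {L L' : Fin (N + 1) → ℤ}

lemma IsBPath.apply_mem_Icc (h : IsBPath N L) (j : Fin (N + 1)) :
    L j ∈ Set.Icc (L 0) (L 0 + j) := by
  induction j using Fin.induction with
  | zero => simp
  | succ i ih =>
    simp only [Set.mem_Icc, Fin.val_succ, Fin.val_castSucc] at ih ⊢
    rcases h i with h' | h' <;> rw [h'] <;> push_cast <;> omega

def upSteps (L : Fin (N + 1) → ℤ) : Fin N → Bool :=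
  fun j => decide (L j.succ = L j.castSucc + 1)

lemma IsBPath.eq_of_upSteps_eq (hL : IsBPath N L) (hL' : IsBPath N L') (h0 : L 0 = L' 0)
    (h : upSteps L = upSteps L') : L = L' := by
  funext j
  induction j using Fin.induction with
  | zero => exact h0
  | succ i ih =>
    have hi := congrFun h i
    simp only [upSteps, decide_eq_decide] at hi
    rcases hL i with h₁ | h₁ <;> rcases hL' i with h₂ | h₂ <;> omega

end Paths

namespace TLset

variable {N : ℕ}

lemma toNat_gaps_le_add {p : (Fin (N + 1) → ℤ) × (Fin (N + 1) → ℤ)} (hp : p ∈ TLset N) :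
    (p.1 (Fin.last N) - p.2 (Fin.last N)).toNat ≤ (-p.2 0).toNat + N ∧
      (-p.2 0).toNat ≤ (p.1 (Fin.last N) - p.2 (Fin.last N)).toNat + N := by
  obtain ⟨h0, hle, h₁, h₂⟩ := hp
  have hl₁ := h₁.apply_mem_Icc (Fin.last N)
  have hl₂ := h₂.apply_mem_Icc (Fin.last N)
  have := hle 0
  simp only [Set.mem_Icc, Fin.val_last] at hl₁ hl₂
  omega

def code (p : TLset N) : ℕ × (Fin N → Bool) × (Fin N → Bool) :=
  ((-p.1.2 0).toNat, upSteps p.1.1, upSteps p.1.2)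

lemma code_injective : Function.Injective (code (N := N)) := by
  rintro ⟨p, h0, hle, h₁, h₂⟩ ⟨p', h0', hle', h₁', h₂'⟩ h
  dsimp only [code] at h
  simp only [Prod.mk.injEq] at h
  obtain ⟨hk, hs₁, hs₂⟩ := h
  have h20 : p.2 0 = p'.2 0 := by
    have := hle 0
    have := hle' 0
    omega
  exact Subtype.ext <| Prod.ext (h₁.eq_of_upSteps_eq h₁' (h0.trans h0'.symm) hs₁)
    (h₂.eq_of_upSteps_eq h₂' h20 hs₂)

lemma zero_mem : (0 : (Fin (N + 1) → ℤ) × (Fin (N + 1) → ℤ)) ∈ TLset N :=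
  ⟨rfl, fun _ => le_rfl, fun _ => Or.inl rfl, fun _ => Or.inl rfl⟩

end TLset

section Weight

variable {N : ℕ} {q a b c d : ℝ}

lemma twt_nonneg (ha : 0 ≤ a) (hb : 0 ≤ b) (hc₀ : -1 ≤ c) (hd₀ : -1 ≤ d) (hcd : c * d ≤ 1)
    (hq₀ : 0 ≤ q) (hq₁ : q < 1) (p : (Fin (N + 1) → ℤ) × (Fin (N + 1) → ℤ)) :
    0 ≤ twt N q a b c d p :=
  mul_nonneg (mul_nonneg (by positivity)
    (div_nonneg (qPoch_nonneg hcd hq₀ hq₁.le _) (qPoch_self_pos hq₀ hq₁ _).le))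
    (prod_nonneg fun _ _ => Wfac_nonneg hc₀ hd₀ hcd hq₀ hq₁.le _ _ _)

lemma twt_le_of_mem (ha : 0 ≤ a) (hb : 0 ≤ b) (hab : a * b ≤ 1) (hc₀ : -1 ≤ c) (hc₁ : c ≤ 0)
    (hd₀ : -1 ≤ d) (hd₁ : d ≤ 0) (hq₀ : 0 ≤ q) (hq₁ : q < 1)
    {p : (Fin (N + 1) → ℤ) × (Fin (N + 1) → ℤ)} (hp : p ∈ TLset N) :
    twt N q a b c d p ≤
      (max 1 a * max 1 b) ^ N * exp (q / (1 - q) ^ 2) * (a * b) ^ ((-p.2 0).toNat - N) := by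
  have hcd₀ : 0 ≤ c * d := by nlinarith
  have hcd₁ : c * d ≤ 1 := by nlinarith
  obtain ⟨hk₁, hk₂⟩ := TLset.toNat_gaps_le_add hp
  unfold twt
  rw [hp.1, zero_sub]
  calc _ ≤ (max 1 a * max 1 b) ^ N * (a * b) ^ ((-p.2 0).toNat - N) *
        exp (q / (1 - q) ^ 2) * 1 := by
        gcongr ?_ * ?_ * ?_
        · exact prod_nonneg fun _ _ => Wfac_nonneg hc₀ hd₀ hcd₁ hq₀ hq₁.le _ _ _
        · exact div_nonneg (qPoch_nonneg hcd₁ hq₀ hq₁.le _) (qPoch_self_pos hq₀ hq₁ _).le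
        · exact pow_mul_pow_le_of_le_add ha hb hab hk₂ hk₁
        · exact qPoch_div_qPoch_self_le hcd₀ hcd₁ hq₀ hq₁ _
        · exact prod_le_one (fun _ _ => Wfac_nonneg hc₀ hd₀ hcd₁ hq₀ hq₁.le _ _ _)
            fun _ _ => Wfac_le_one hc₁ hd₁ hcd₀ hq₀ _ _ _
    _ = _ := by ring

lemma twt_zero : twt N q a b c d 0 = (1 + c) ^ N := by
  simp [twt, qPoch, Wfac]

lemma summable_twt (ha : 0 ≤ a) (hb : 0 ≤ b) (hab : a * b < 1) (hc₀ : -1 ≤ c) (hc₁ : c ≤ 0)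
    (hd₀ : -1 ≤ d) (hd₁ : d ≤ 0) (hq₀ : 0 ≤ q) (hq₁ : q < 1) :
    Summable fun p : TLset N => twt N q a b c d p := by
  set C := (max 1 a * max 1 b) ^ N * exp (q / (1 - q) ^ 2)
  have hgeom : Summable fun k : ℕ => C * (a * b) ^ (k - N) :=
    ((summable_nat_add_iff N).mp
      (by simpa using summable_geometric_of_lt_one (by positivity) hab)).mul_left C
  have hcode : Summable fun x : ℕ × (Fin N → Bool) × (Fin N → Bool) =>
      C * (a * b) ^ (x.1 - N) := by
    simpa using hgeom.mul_of_nonneg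
      (.of_finite (f := fun _ : (Fin N → Bool) × (Fin N → Bool) => (1 : ℝ)))
      (fun _ => by positivity) fun _ => zero_le_one
  exact (hcode.comp_injective TLset.code_injective).of_nonneg_of_le
    (fun p => twt_nonneg ha hb hc₀ hd₀ (by nlinarith) hq₀ hq₁ _)
    fun p => twt_le_of_mem ha hb hab.le hc₀ hc₁ hd₀ hd₁ hq₀ hq₁ p.2

end Weight

theorem stmt6 (q a b c d : ℝ)
    (ha : 0 ≤ a) (hb : 0 ≤ b)
    (hc1 : -1 < c) (hc2 : c ≤ 0) (hd1 : -1 < d) (hd2 : d ≤ 0)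
    (hq0 : 0 ≤ q) (hq1 : q < 1) (hab : a * b < 1) (N : ℕ) :
    Summable (fun p : TLset N => twt N q a b c d p.val) ∧
      0 < ∑' p : TLset N, twt N q a b c d p.val := by
  have hsum := summable_twt ha hb hab hc1.le hc2 hd1.le hd2 hq0 hq1 (N := N)
  refine ⟨hsum, hsum.tsum_pos (fun p => twt_nonneg ha hb hc1.le hd1.le (by nlinarith) hq0 hq1 _)
    ⟨0, TLset.zero_mem⟩ ?_⟩
  rw [twt_zero]
  have : 0 < 1 + c := by linarith
  positivity
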